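/- Let S be a topological space and Ψ : S ≃ S a homeomorphism. Then the natural projection p : S × ℝ → (S × ℝ)/χ from S × ℝ onto the orbit space of the ℤ-action n • (s, r) = (Ψ^n(s), r + n) is a covering map. -/

import Mathlib

/-!
The translates of the slab `S × (c - 1/2, c + 1/2)` under `n ≠ 0` miss the slab, because `n` shifts
the height by `n`. So every point of `S × ℝ` has a neighbourhood disjoint from all its nontrivial
translates, and the quotient map of a continuous action with this property is a covering map.
-/

/-- The orbit relation on `S × ℝ` of the ℤ-action `n • (s, r) = (Ψ^n(s), r + n)`
generated by `χ(s, r) = (Ψ(s), r + 1)`. -/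
def mappingTorusRel {S : Type*} (Ψ : S ≃ S) (p q : S × ℝ) : Prop :=
  ∃ n : ℤ, ((Ψ ^ n) p.1, p.2 + n) = q

open Topology Metric

theorem AddAction.isAddQuotientCoveringMap_quotientMk_of_disjoint {G E : Type*} [AddGroup G]
    [AddAction G E] [TopologicalSpace E] [ContinuousConstVAdd G E]
    (disjoint : ∀ e : E, ∃ U ∈ 𝓝 e, ∀ g : G, ((g +ᵥ ·) '' U ∩ U).Nonempty → g = 0) :
    IsAddQuotientCoveringMap (Quotient.mk (AddAction.orbitRel G E)) G where
  __ := isQuotientMap_quotient_mk'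
  apply_eq_iff_mem_orbit := Quotient.eq''
  disjoint := disjoint

theorem Homeomorph.toEquiv_zpow {X : Type*} [TopologicalSpace X] (h : X ≃ₜ X) (n : ℤ) :
    (h ^ n).toEquiv = h.toEquiv ^ n :=
  map_zpow (MonoidHom.mk' Homeomorph.toEquiv fun _ _ => rfl : (X ≃ₜ X) →* Equiv.Perm X) h n

theorem Int.eq_zero_of_mem_ball_of_add_mem_ball {n : ℤ} {c t : ℝ} (ht : t ∈ ball c 2⁻¹)
    (hnt : t + n ∈ ball c 2⁻¹) : n = 0 := by
  have : |(n : ℝ)| < 1 := by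
    calc |(n : ℝ)| = dist (t + n) t := by simp
      _ ≤ dist (t + n) c + dist t c := dist_triangle_right _ _ _
      _ < 2⁻¹ + 2⁻¹ := add_lt_add hnt ht
      _ = 1 := by norm_num
  exact Int.abs_lt_one_iff.mp (by exact_mod_cast this)

section MappingTorus

variable {S : Type*}

/-- Not an instance, since it depends on `Ψ`. -/
abbrev mappingTorusAction (Ψ : S ≃ S) : AddAction ℤ (S × ℝ) where
  vadd n x := ((Ψ ^ n) x.1, x.2 + n)
  zero_vadd x := by
    change ((Ψ ^ (0 : ℤ)) x.1, x.2 + ((0 : ℤ) : ℝ)) = x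
    simp
  add_vadd m n x := by
    change ((Ψ ^ (m + n)) x.1, x.2 + ((m + n : ℤ) : ℝ)) = ((Ψ ^ m) ((Ψ ^ n) x.1), x.2 + n + m)
    rw [zpow_add, Equiv.Perm.mul_apply, Int.cast_add, add_comm (m : ℝ), add_assoc]

theorem mappingTorusRel_eq_orbitRel (Ψ : S ≃ S) :
    letI := mappingTorusAction Ψ
    mappingTorusRel Ψ = AddAction.orbitRel ℤ (S × ℝ) := by
  let := mappingTorusAction Ψ
  funext p q
  exact propext AddAction.mem_orbit_symm

theorem continuousConstVAdd_mappingTorusAction [TopologicalSpace S] (Ψ : S ≃ₜ S) :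
    letI := mappingTorusAction Ψ.toEquiv
    ContinuousConstVAdd ℤ (S × ℝ) := by
  let := mappingTorusAction Ψ.toEquiv
  refine ⟨fun n => ?_⟩
  have hΨn : Continuous (Ψ.toEquiv ^ n) := by
    rw [← Homeomorph.toEquiv_zpow]
    exact (Ψ ^ n).continuous
  exact (hΨn.comp continuous_fst).prodMk (continuous_snd.add continuous_const)

theorem mappingTorusAction_exists_nhds_disjoint_translates [TopologicalSpace S] (Ψ : S ≃ S)
    (x : S × ℝ) :
    letI := mappingTorusAction Ψ
    ∃ U ∈ 𝓝 x, ∀ n : ℤ, ((n +ᵥ ·) '' U ∩ U).Nonempty → n = 0 := by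
  let := mappingTorusAction Ψ
  refine ⟨Prod.snd ⁻¹' ball x.2 2⁻¹,
    continuous_snd.continuousAt.preimage_mem_nhds (ball_mem_nhds _ (by norm_num)), ?_⟩
  rintro n ⟨_, ⟨y, hy, rfl⟩, hny⟩
  exact Int.eq_zero_of_mem_ball_of_add_mem_ball hy hny

end MappingTorus

/-- For a homeomorphism `Ψ : S ≃ₜ S`, the natural projection from `S × ℝ` onto the orbit
space of the ℤ-action `n • (s, r) = (Ψ^n(s), r + n)` (the mapping torus of `Ψ`) is a
covering map. -/
theorem mapping_torus_projection_isCoveringMap {S : Type*} [TopologicalSpace S] (Ψ : S ≃ₜ S) :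
    IsCoveringMap (Quot.mk (mappingTorusRel Ψ.toEquiv)) := by
  let := mappingTorusAction Ψ.toEquiv
  have := continuousConstVAdd_mappingTorusAction Ψ
  rw [mappingTorusRel_eq_orbitRel]
  exact (AddAction.isAddQuotientCoveringMap_quotientMk_of_disjoint
    (mappingTorusAction_exists_nhds_disjoint_translates Ψ.toEquiv)).isCoveringMap
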